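/- arXiv:1610.02978 — 4 statements merged into one kernel-verified Lean document; each statement's English description precedes it below -/
import Mathlib

section
/- Let $k \geq 2$ be an integer and let $d_1, \ldots, d_k$ be positive integers. For each non-empty subset $I \subseteq \{1, \ldots, k\}$ set $d_I = \sum_{i \in I} d_i$. Then, as integers, $$\sum_{\emptyset \neq I \subseteq \{1,\ldots,k\}} \left\lfloor \frac{d_I - 1}{2} \right\rfloor = 2^{k-2}(d_1 + \cdots + d_k - 4) + 1 + \delta_k,$$ where $\delta_k = 2^{k-2}$ if at least one of the $d_i$ is odd, and $\delta_k = 0$ if all of the $d_i$ are even. -/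
/-!
The identity `4 ⌊(n - 1)/2⌋ = 2n - 3 - (-1)^n` removes the floor. Summed over all subsets `I`,
the linear part gives `2^k (d₁ + ⋯ + d_k - 3)`, since each `d_i` lies in half of the subsets, and the
sign part is `∑_I (-1)^{d_I} = ∏_i (1 + (-1)^{d_i})`, which is `0` if some `d_i` is odd and `2^k`
otherwise. Dropping the empty subset, whose term is `⌊-1/2⌋ = -1`, gives the formula.
-/

open Finset

namespace Finset

variable {ι : Type*}

theorem sum_powerset_filter_nonempty {M : Type*} [AddCommGroup M] (s : Finset ι)
    (g : Finset ι → M) : ∑ t ∈ s.powerset with t.Nonempty, g t = ∑ t ∈ s.powerset, g t - g ∅ := by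
  classical
  simp_rw [nonempty_iff_ne_empty, filter_ne', sum_erase_eq_sub (empty_mem_powerset s)]

theorem two_mul_sum_powerset_sum {R : Type*} [CommSemiring R] (s : Finset ι) (f : ι → R) :
    2 * ∑ t ∈ s.powerset, ∑ i ∈ t, f i = 2 ^ #s * ∑ i ∈ s, f i := by
  classical
  induction s using Finset.induction_on with
  | empty => simp
  | @insert a s ha ih =>
    have hsum_insert : ∀ t ∈ s.powerset, ∑ i ∈ insert a t, f i = f a + ∑ i ∈ t, f i :=
      fun t ht => sum_insert (notMem_of_mem_powerset_of_notMem ht ha)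
    rw [sum_powerset_insert ha, sum_congr rfl hsum_insert, sum_add_distrib, sum_const,
      card_powerset, nsmul_eq_mul, card_insert_of_notMem ha, sum_insert ha, pow_succ]
    push_cast
    calc 2 * (∑ t ∈ s.powerset, ∑ i ∈ t, f i + (2 ^ #s * f a + ∑ t ∈ s.powerset, ∑ i ∈ t, f i))
        = 2 * 2 ^ #s * f a + 2 * (2 * ∑ t ∈ s.powerset, ∑ i ∈ t, f i) := by ring
      _ = 2 ^ #s * 2 * (f a + ∑ i ∈ s, f i) := by rw [ih]; ring

theorem sum_powerset_neg_one_pow_sum {R : Type*} [CommRing R] (s : Finset ι) (f : ι → ℕ) :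
    ∑ t ∈ s.powerset, (-1 : R) ^ (∑ i ∈ t, f i) = ∏ i ∈ s, (1 + (-1) ^ f i) := by
  simp only [prod_one_add, prod_pow_eq_pow_sum]

theorem prod_one_add_neg_one_pow (s : Finset ι) (f : ι → ℕ) :
    ∏ i ∈ s, (1 + (-1 : ℤ) ^ f i) = if ∃ i ∈ s, Odd (f i) then 0 else 2 ^ #s := by
  split_ifs with h
  · obtain ⟨i, hi, hodd⟩ := h
    exact prod_eq_zero hi (by rw [hodd.neg_one_pow]; norm_num)
  · push Not at h
    rw [prod_congr rfl fun i hi => by rw [(Nat.not_odd_iff_even.mp (h i hi)).neg_one_pow],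
      prod_const]
    norm_num

end Finset

theorem four_mul_natCast_sub_one_ediv_two (n : ℕ) :
    4 * (((n : ℤ) - 1) / 2) = 2 * n - 3 - (-1) ^ n := by
  rcases Nat.even_or_odd n with ⟨m, rfl⟩ | ⟨m, rfl⟩
  · rw [Even.neg_one_pow ⟨m, rfl⟩]
    push_cast
    omega
  · rw [Odd.neg_one_pow ⟨m, rfl⟩]
    push_cast
    omega

theorem Finset.four_mul_sum_powerset_sub_one_ediv_two {ι : Type*} (s : Finset ι) (f : ι → ℕ) :
    4 * ∑ t ∈ s.powerset, ((∑ i ∈ t, (f i : ℤ)) - 1) / 2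
      = 2 ^ #s * (∑ i ∈ s, (f i : ℤ) - 3) - if ∃ i ∈ s, Odd (f i) then 0 else 2 ^ #s := by
  have hlinear := two_mul_sum_powerset_sum s (fun i => (f i : ℤ))
  rw [← prod_one_add_neg_one_pow, ← sum_powerset_neg_one_pow_sum, mul_sum]
  simp_rw [← Nat.cast_sum, four_mul_natCast_sub_one_ediv_two]
  rw [sum_sub_distrib, sum_sub_distrib, ← mul_sum, sum_const, card_powerset, nsmul_eq_mul]
  push_cast at hlinear ⊢
  linear_combination hlinear

theorem sum_genus_eq_general (k : ℕ) (hk : 2 ≤ k) (d : Fin k → ℕ) :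
    ∑ I ∈ Finset.univ.powerset.filter (fun I : Finset (Fin k) => I.Nonempty),
        ((∑ i ∈ I, (d i : ℤ)) - 1) / 2
      = 2 ^ (k - 2) * ((∑ i, (d i : ℤ)) - 4) + 1
          + (if ∃ i, Odd (d i) then (2 : ℤ) ^ (k - 2) else 0) := by
  obtain ⟨m, rfl⟩ := Nat.exists_eq_add_of_le' hk
  have htotal := four_mul_sum_powerset_sub_one_ediv_two univ d
  rw [sum_powerset_filter_nonempty]
  simp only [card_univ, Fintype.card_fin, mem_univ, true_and, Nat.add_sub_cancel, sum_empty,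
    zero_sub, Int.reduceNeg, Int.reduceDiv, pow_add] at htotal ⊢
  split_ifs at htotal ⊢ <;> linarith

/-- Genus identity: the sum over nonempty subsets `I ⊆ {1,...,k}` of
`⌊(d_I - 1)/2⌋`, where `d_I = ∑_{i ∈ I} d i`, equals
`2^(k-2) * (d₁ + ⋯ + d_k - 4) + 1 + δ`, where `δ = 2^(k-2)` if some `d i` is odd
and `δ = 0` if all `d i` are even. -/
theorem sum_genus_eq (k : ℕ) (hk : 2 ≤ k) (d : Fin k → ℕ) (hd : ∀ i, 0 < d i) :
    ∑ I ∈ Finset.univ.powerset.filter (fun I : Finset (Fin k) => I.Nonempty),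
        ((∑ i ∈ I, (d i : ℤ)) - 1) / 2
      = 2 ^ (k - 2) * ((∑ i, (d i : ℤ)) - 4) + 1
          + (if ∃ i, Odd (d i) then (2 : ℤ) ^ (k - 2) else 0) :=
  sum_genus_eq_general k hk d
end

section
/- Let $\mathbb{F}_{37}$ be the field with $37$ elements, $f_1 = x^4 + x^3 + 35x^2 + 32x + 1$ and $f_2 = x^4 + 11x^3 + 29x^2 + 13x + 29$ in $\mathbb{F}_{37}[x]$. Then $\#\{(x, y_1, y_2) \in \mathbb{F}_{37}^3 : y_1^2 = f_1(x) \text{ and } y_2^2 = f_2(x)\} = 84$. -/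
theorem Nat.card_setOf_prod_prod_and {α β γ : Type*} [Fintype α] [Fintype β] [Fintype γ]
    (P : α → β → Prop) (Q : α → γ → Prop) [∀ x, DecidablePred (P x)]
    [∀ x, DecidablePred (Q x)] :
    Nat.card {p : α × β × γ | P p.1 p.2.1 ∧ Q p.1 p.2.2} =
      ∑ x, Fintype.card {y // P x y} * Fintype.card {z // Q x z} := by
  let e : {p : α × β × γ | P p.1 p.2.1 ∧ Q p.1 p.2.2} ≃
      (x : α) × ({y // P x y} × {z // Q x z}) :=
    { toFun := fun p => ⟨p.1.1, ⟨p.1.2.1, p.2.1⟩, ⟨p.1.2.2, p.2.2⟩⟩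
      invFun := fun q => ⟨⟨q.1, q.2.1.1, q.2.2.1⟩, q.2.1.2, q.2.2.2⟩
      left_inv := fun _ => rfl
      right_inv := fun _ => rfl }
  rw [Nat.card_congr e, Nat.card_eq_fintype_card, Fintype.card_sigma]
  simp only [Fintype.card_prod]

/-- Affine point count of the fibre product curve `y₁² = f₁(x)`, `y₂² = f₂(x)`. -/
theorem affine_point_count_8 :
    Nat.card {p : (ZMod 37) × (ZMod 37) × (ZMod 37) |
      p.2.1 ^ 2 = p.1^4 + p.1^3 + 35*p.1^2 + 32*p.1 + 1 ∧
      p.2.2 ^ 2 = p.1^4 + 11*p.1^3 + 29*p.1^2 + 13*p.1 + 29} = 84 := by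
  rw [Nat.card_setOf_prod_prod_and (fun x y => y ^ 2 = x^4 + x^3 + 35*x^2 + 32*x + 1)
    (fun x z => z ^ 2 = x^4 + 11*x^3 + 29*x^2 + 13*x + 29)]
  decide
end

section
/- Let $\mathbb{F}_{53}$ be the field with $53$ elements, $f_1 = x^4 + x^3 + 52x^2 + 47x + 1$ and $f_2 = x^4 + 16x^3 + 36x^2 + 18x + 46$ in $\mathbb{F}_{53}[x]$. Then $\#\{(x, y_1, y_2) \in \mathbb{F}_{53}^3 : y_1^2 = f_1(x) \text{ and } y_2^2 = f_2(x)\} = 116$. -/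
open Finset

theorem Nat.card_fiberProduct_eq_sum {α β γ : Type*} [Fintype α] [Fintype β] [Fintype γ]
    (P : α → β → Prop) (Q : α → γ → Prop) [∀ x, DecidablePred (P x)] [∀ x, DecidablePred (Q x)] :
    Nat.card {p : α × β × γ | P p.1 p.2.1 ∧ Q p.1 p.2.2} =
      ∑ x, #{y | P x y} * #{z | Q x z} := by
  let e : {p : α × β × γ | P p.1 p.2.1 ∧ Q p.1 p.2.2} ≃ Σ x, {y // P x y} × {z // Q x z} :=
    { toFun := fun p => ⟨p.1.1, ⟨p.1.2.1, p.2.1⟩, ⟨p.1.2.2, p.2.2⟩⟩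
      invFun := fun s => ⟨(s.1, s.2.1.1, s.2.2.1), s.2.1.2, s.2.2.2⟩ }
  rw [Nat.card_congr e, Nat.card_eq_fintype_card, Fintype.card_sigma]
  simp only [Fintype.card_prod, Fintype.card_subtype]

/-- Affine point count of the fibre product curve `y₁² = f₁(x)`, `y₂² = f₂(x)`. -/
theorem affine_point_count_12 :
    Nat.card {p : (ZMod 53) × (ZMod 53) × (ZMod 53) |
      p.2.1 ^ 2 = p.1^4 + p.1^3 + 52*p.1^2 + 47*p.1 + 1 ∧
      p.2.2 ^ 2 = p.1^4 + 16*p.1^3 + 36*p.1^2 + 18*p.1 + 46} = 116 := by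
  rw [Nat.card_fiberProduct_eq_sum (fun x y => y ^ 2 = x^4 + x^3 + 52*x^2 + 47*x + 1)
    (fun x z => z ^ 2 = x^4 + 16*x^3 + 36*x^2 + 18*x + 46)]
  decide
end

section
/- Let $\mathbb{F}_{41}$ be the field with $41$ elements, $f_1 = x^5 + 31x^4 + 11x^3 + 14x^2 + 35x + 40$ and $f_2 = x^3 + 23x^2 + 5x + 17$ in $\mathbb{F}_{41}[x]$. Then $\#\{(x, y_1, y_2) \in \mathbb{F}_{41}^3 : y_1^2 = f_1(x) \text{ and } y_2^2 = f_2(x)\} = 102$. -/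
open Finset

theorem card_setOf_sq_eq_and_sq_eq {R : Type*} [Monoid R] [Fintype R] [DecidableEq R] (f g : R → R) :
    Nat.card {p : R × R × R | p.2.1 ^ 2 = f p.1 ∧ p.2.2 ^ 2 = g p.1} =
      ∑ x, #{y | y ^ 2 = f x} * #{y | y ^ 2 = g x} := by
  let e : {p : R × R × R | p.2.1 ^ 2 = f p.1 ∧ p.2.2 ^ 2 = g p.1} ≃
      Σ x : R, {y : R // y ^ 2 = f x} × {y : R // y ^ 2 = g x} :=
    { toFun p := ⟨p.1.1, ⟨p.1.2.1, p.2.1⟩, ⟨p.1.2.2, p.2.2⟩⟩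
      invFun q := ⟨⟨q.1, q.2.1.1, q.2.2.1⟩, q.2.1.2, q.2.2.2⟩ }
  simp only [Nat.card_congr e, Nat.card_eq_fintype_card, Fintype.card_sigma, Fintype.card_prod,
    Fintype.card_subtype]

/-- Affine point count of the fibre product curve `y₁² = f₁(x)`, `y₂² = f₂(x)`. -/
theorem affine_point_count_17 :
    Nat.card {p : (ZMod 41) × (ZMod 41) × (ZMod 41) |
      p.2.1 ^ 2 = p.1^5 + 31*p.1^4 + 11*p.1^3 + 14*p.1^2 + 35*p.1 + 40 ∧
      p.2.2 ^ 2 = p.1^3 + 23*p.1^2 + 5*p.1 + 17} = 102 := by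
  rw [card_setOf_sq_eq_and_sq_eq (fun x => x^5 + 31*x^4 + 11*x^3 + 14*x^2 + 35*x + 40)
    (fun x => x^3 + 23*x^2 + 5*x + 17)]
  decide
end
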